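/- Two LPMLN programs P and Q are semi-uniformly equivalent (i.e., for every set R of weighted facts, SM(P ∪ R) = SM(Q ∪ R)) if and only if P and Q have the same UE-models. -/

import Mathlib

open scoped Classical

noncomputable section

namespace LPMLN

/-- A ground literal: an atom (numbered by `ℕ`) or its classical negation. -/
inductive Lit where
  | pos : ℕ → Lit
  | neg : ℕ → Lit
deriving DecidableEq

/-- The complementary literal. -/
def Lit.compl : Lit → Lit
  | .pos a => .neg a
  | .neg a => .pos a

/-- A finite set of literals is consistent if it contains no complementary pair. -/
def Consistent (I : Finset Lit) : Prop := ∀ l ∈ I, l.compl ∉ I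

/-- An ASP rule, given by its head, positive body and negative body. -/
structure Rule where
  head : Finset Lit
  pos : Finset Lit
  neg : Finset Lit
deriving DecidableEq

/-- The literals occurring in a rule. -/
def Rule.lits (r : Rule) : Finset Lit := r.head ∪ r.pos ∪ r.neg

/-- Satisfaction of a rule by a set of literals. -/
def Sat (I : Finset Lit) (r : Rule) : Prop :=
  r.pos ⊆ I → r.neg ∩ I = ∅ → (r.head ∩ I).Nonempty

/-- Satisfaction of an ASP program. -/
def SatProg (I : Finset Lit) (prog : Finset Rule) : Prop := ∀ r ∈ prog, Sat I r

/-- The GL-reduct of an ASP program w.r.t. an interpretation. -/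
def glReduct (prog : Finset Rule) (I : Finset Lit) : Finset Rule :=
  (prog.filter fun r => r.neg ∩ I = ∅).image fun r => ⟨r.head, r.pos, ∅⟩

/-- `I` is a stable model of the ASP program `prog`: `I` is a consistent set of
literals satisfying the GL-reduct, no proper subset of which satisfies the GL-reduct. -/
def AspStable (prog : Finset Rule) (I : Finset Lit) : Prop :=
  Consistent I ∧ SatProg I (glReduct prog I) ∧ ∀ J ⊂ I, ¬ SatProg J (glReduct prog I)

/-- A weight: a real number (soft rule) or the symbol `α` (hard rule). -/
inductive Weight where
  | soft : ℝ → Weight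
  | hard : Weight

/-- The real value of a soft weight (hard weights get the dummy value 0). -/
def Weight.val : Weight → ℝ
  | .soft w => w
  | .hard => 0

/-- A weighted rule `w : r`. -/
structure WRule where
  w : Weight
  r : Rule

/-- An LPMLN program: a finite set of weighted rules. -/
abbrev Program := Finset WRule

/-- The LPMLN reduct `P_I`: the rules of `P` satisfied by `I`. -/
def reduct (P : Program) (I : Finset Lit) : Program := P.filter fun wr => Sat I wr.r

/-- The unweighted ASP counterpart of an LPMLN program. -/
def unweighted (P : Program) : Finset Rule := P.image fun wr => wr.r

/-- `I` is a stable model of the LPMLN program `P`: `I` is a stable model of the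
unweighted ASP counterpart of the LPMLN reduct `P_I`. -/
def Stable (P : Program) (I : Finset Lit) : Prop :=
  AspStable (unweighted (reduct P I)) I

/-- The literals occurring in an LPMLN program. -/
def litset (P : Program) : Finset Lit := P.biUnion fun wr => wr.r.lits

/-- `(X, Y)` is an SE-interpretation: a pair of interpretations with `X ⊆ Y`. -/
def SEInterp (X Y : Finset Lit) : Prop := Consistent X ∧ Consistent Y ∧ X ⊆ Y

/-- `(X, Y)` is an SE-model of the LPMLN program `P`: an SE-interpretation such that
`X` satisfies the GL-reduct (w.r.t. `Y`) of the unweighted version of `P_Y`. -/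
def SEModel (P : Program) (X Y : Finset Lit) : Prop :=
  SEInterp X Y ∧ SatProg X (glReduct (unweighted (reduct P Y)) Y)

/-- The number of hard rules of `P` satisfied by `I`. -/
def hardCount (P : Program) (I : Finset Lit) : ℕ :=
  ((reduct P I).filter fun wr => wr.w = Weight.hard).card

/-- The sum of the weights of the soft rules of `P` satisfied by `I`. -/
def softWeight (P : Program) (I : Finset Lit) : ℝ :=
  ∑ wr ∈ ((reduct P I).filter fun wr => wr.w ≠ Weight.hard), wr.w.val

/-- The weight degree `W(P, I) = exp(Σ_{w:r ∈ P_I} w)`, viewed as the real-valued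
function `A ↦ exp(c' + k'·A)` of the value `A` given to the symbol `α`, where `k'` is
the number of hard rules of `P` satisfied by `I` and `c'` the sum of the weights of the
soft rules of `P` satisfied by `I`. -/
def wdeg (P : Program) (I : Finset Lit) (A : ℝ) : ℝ :=
  Real.exp (softWeight P I + A * hardCount P I)

/-- The (finite) set of stable models of `P` (every stable model of `P` is a subset of
`litset P`). -/
def SMset (P : Program) : Finset (Finset Lit) :=
  (litset P).powerset.filter fun I => Stable P I

/-- The probability degree `Pr(P, I)`: the limit, as `α → ∞`, of
`W(P, I) / Σ_{I' ∈ SM(P)} W(P, I')` if `I` is a stable model of `P`, and `0` otherwise. -/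
def PrDeg (P : Program) (I : Finset Lit) : ℝ :=
  if Stable P I then
    Filter.limUnder Filter.atTop fun A => wdeg P I A / ∑ I' ∈ SMset P, wdeg P I' A
  else 0

/-- `I` is a probabilistic stable model of `P`: a stable model of `P` satisfying the
maximum number of hard rules of `P` (equivalently, with nonzero probability degree). -/
def PStable (P : Program) (I : Finset Lit) : Prop :=
  Stable P I ∧ ∀ J, Stable P J → hardCount P J ≤ hardCount P I

/-- Semi-strong equivalence: the extensions by any LPMLN program have the same
stable models. -/
def SemiStrongEq (P Q : Program) : Prop :=
  ∀ R : Program, ∀ I, Stable (P ∪ R) I ↔ Stable (Q ∪ R) I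

/-- p-ordinary equivalence: same stable models and same probability degrees. -/
def POrdEq (P Q : Program) : Prop :=
  (∀ I, Stable P I ↔ Stable Q I) ∧ ∀ I, Stable P I → PrDeg P I = PrDeg Q I

/-- p-strong equivalence: p-ordinary equivalence under every extension. -/
def PStrongEq (P Q : Program) : Prop := ∀ R : Program, POrdEq (P ∪ R) (Q ∪ R)

/-- Comparison of the symbolic weight degrees of two interpretations w.r.t. `P`:
`exp(c + k·α) ≤ exp(c' + k'·α)` iff `k < k'`, or `k = k'` and `c ≤ c'`. -/
def WLe (P : Program) (I J : Finset Lit) : Prop :=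
  hardCount P I < hardCount P J ∨
    (hardCount P I = hardCount P J ∧ softWeight P I ≤ softWeight P J)

/-- q-strong equivalence: same stable models under every extension, with
order-preserving weight degrees. -/
def QStrongEq (P Q : Program) : Prop :=
  ∀ R : Program,
    (∀ I, Stable (P ∪ R) I ↔ Stable (Q ∪ R) I) ∧
    ∀ X Y, Stable (P ∪ R) X → Stable (P ∪ R) Y → (WLe (P ∪ R) X Y ↔ WLe (Q ∪ R) X Y)

/-- A soft stable model of `P`: a stable model of `P` satisfying all hard rules of `P`. -/
def SoftStable (P : Program) (I : Finset Lit) : Prop :=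
  Stable P I ∧ ∀ wr ∈ P, wr.w = Weight.hard → Sat I wr.r

/-- A soft SE-model of `P`: an SE-model `(X, Y)` of `P` such that `Y` satisfies all
hard rules of `P`. -/
def SoftSEModel (P : Program) (X Y : Finset Lit) : Prop :=
  SEModel P X Y ∧ ∀ wr ∈ P, wr.w = Weight.hard → Sat Y wr.r

/-- The (finite) set of soft stable models of `P`. -/
def SSMset (P : Program) : Finset (Finset Lit) :=
  (litset P).powerset.filter fun I => SoftStable P I

/-- The probability degree under the soft stable model semantics:
`Pr_s(P, X) = W_s(P, X) / Σ_{X' ∈ SSM(P)} W_s(P, X')`, where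
`W_s(P, X) = exp(Σ_{w:r ∈ P^s, X ⊨ r} w)`. -/
def PrS (P : Program) (X : Finset Lit) : ℝ :=
  Real.exp (softWeight P X) / ∑ X' ∈ SSMset P, Real.exp (softWeight P X')

/-- sp-strong equivalence: p-strong equivalence under the soft stable model
semantics. -/
def SPStrongEq (P Q : Program) : Prop :=
  ∀ R : Program,
    (∀ I, SoftStable (P ∪ R) I ↔ SoftStable (Q ∪ R) I) ∧
    ∀ X, SoftStable (P ∪ R) X → PrS (P ∪ R) X = PrS (Q ∪ R) X

/-- `(X, Y)` is a UE-model of `P`: an SE-model with `X = Y`, or with `X ⊊ Y` such that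
no `X'` strictly between `X` and `Y` gives an SE-model `(X', Y)`. -/
def UEModel (P : Program) (X Y : Finset Lit) : Prop :=
  SEModel P X Y ∧
    (X = Y ∨ (X ⊂ Y ∧ ∀ X', X ⊂ X' → X' ⊂ Y → ¬ SEModel P X' Y))

/-- A program consisting of weighted facts only (rules with empty bodies). -/
def IsFactProg (R : Program) : Prop := ∀ wr ∈ R, wr.r.pos = ∅ ∧ wr.r.neg = ∅

/-- p-uniform equivalence: p-ordinary equivalence under every extension by a set of
weighted facts. -/
def PUniformEq (P Q : Program) : Prop :=
  ∀ R : Program, IsFactProg R → POrdEq (P ∪ R) (Q ∪ R)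

/-- The flattening rules `R(X, Y, a)`: the two hard rules
`α : ← X, not Y, a` and `α : a ← X, not Y`. -/
def flatten (X Y : Finset Lit) (a : ℕ) : Program :=
  {⟨Weight.hard, ⟨∅, X ∪ {Lit.pos a}, Y⟩⟩, ⟨Weight.hard, ⟨{Lit.pos a}, X, Y⟩⟩}

/-- The hard fact `α : l`. -/
def factOf (l : Lit) : WRule := ⟨Weight.hard, ⟨{l}, ∅, ∅⟩⟩

/-- The base flattening extension `E⁰(P, U) = P ∪ {α : a | a ∈ U}`. -/
def E0 (P : Program) (U : Finset Lit) : Program := P ∪ U.image factOf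

/-- `IsFlatExt P U k E` holds iff `E` is a flattening extension `E^k(P, U)`:
`E⁰(P, U) = P ∪ {α : a | a ∈ U}` and `E^{i+1}(P, U) = E^i(P, U) ∪ R(X ∩ U, U − X, c)`
where `X` is a probabilistic stable model of `E^i(P, U)` and `c` is a fresh atom. -/
inductive IsFlatExt (P : Program) (U : Finset Lit) : ℕ → Program → Prop
  | zero : IsFlatExt P U 0 (E0 P U)
  | succ {i : ℕ} {E : Program} {X : Finset Lit} {c : ℕ} :
      IsFlatExt P U i E → PStable E X →
      Lit.pos c ∉ litset E → Lit.neg c ∉ litset E →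
      IsFlatExt P U (i + 1) (E ∪ flatten (X ∩ U) (U \ X) c)

/-! Adding the facts `Z ⊆ Y` to `P` makes `Y` stable exactly when no SE-model `(J, Y)` of `P`
has `Z ⊆ J ⊊ Y`. Semi-uniform equivalence therefore equates, for all `Z ⊆ Y`, the existence of
such SE-models for `P` and for `Q`, and this existence pattern determines the UE-models `(X, Y)`
with `X ⊊ Y`. Conversely, `Y` is stable for `P ∪ R` (with `R` facts) iff no UE-model `(K, Y)` of
`P` with `K ⊊ Y` satisfies the reduct of `R`: a smaller model `J` of the reduct of `P ∪ R` can be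
enlarged to a maximal SE-model `(K, Y)` of `P`, which is a UE-model, and `K` still satisfies the
reduct of `R` because the reduct of a set of facts is upward closed. -/

def glReductOf (P : Program) (I : Finset Lit) : Finset Rule :=
  glReduct (unweighted (reduct P I)) I

lemma mem_glReductOf {P : Program} {I : Finset Lit} {r : Rule} :
    r ∈ glReductOf P I ↔ ∃ wr ∈ P, Sat I wr.r ∧ wr.r.neg ∩ I = ∅ ∧
      r = ⟨wr.r.head, wr.r.pos, ∅⟩ := by
  simp only [glReductOf, glReduct, unweighted, reduct, Finset.mem_image, Finset.mem_filter]
  constructor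
  · rintro ⟨-, ⟨⟨wr, ⟨hwr, hsat⟩, rfl⟩, hneg⟩, rfl⟩
    exact ⟨wr, hwr, hsat, hneg, rfl⟩
  · rintro ⟨wr, hwr, hsat, hneg, rfl⟩
    exact ⟨wr.r, ⟨⟨wr, ⟨hwr, hsat⟩, rfl⟩, hneg⟩, rfl⟩

lemma satProg_glReductOf_self (P : Program) (I : Finset Lit) : SatProg I (glReductOf P I) := by
  intro r hr
  obtain ⟨wr, -, hsat, hneg, rfl⟩ := mem_glReductOf.mp hr
  exact fun hpos _ => hsat hpos hneg

lemma glReductOf_union (P R : Program) (I : Finset Lit) :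
    glReductOf (P ∪ R) I = glReductOf P I ∪ glReductOf R I := by
  ext r
  simp only [mem_glReductOf, Finset.mem_union, or_and_right, exists_or]

lemma satProg_union {J : Finset Lit} {A B : Finset Rule} :
    SatProg J (A ∪ B) ↔ SatProg J A ∧ SatProg J B := by
  simp only [SatProg, Finset.mem_union, or_imp, forall_and]

lemma Consistent.mono {J I : Finset Lit} (hI : Consistent I) (h : J ⊆ I) : Consistent J :=
  fun l hl hc => hI l (h hl) (h hc)

lemma stable_iff {P : Program} {I : Finset Lit} :
    Stable P I ↔ Consistent I ∧ ∀ J ⊂ I, ¬ SatProg J (glReductOf P I) :=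
  ⟨fun h => ⟨h.1, h.2.2⟩, fun h => ⟨h.1, satProg_glReductOf_self P I, h.2⟩⟩

lemma seModel_iff {P : Program} {X Y : Finset Lit} :
    SEModel P X Y ↔ Consistent Y ∧ X ⊆ Y ∧ SatProg X (glReductOf P Y) :=
  ⟨fun ⟨⟨_, hY, hXY⟩, h⟩ => ⟨hY, hXY, h⟩,
    fun ⟨hY, hXY, h⟩ => ⟨⟨hY.mono hXY, hY, hXY⟩, h⟩⟩

lemma ueModel_self_iff {P : Program} {Y : Finset Lit} : UEModel P Y Y ↔ Consistent Y :=
  ⟨fun h => h.1.1.2.1,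
    fun hY => ⟨seModel_iff.mpr ⟨hY, subset_rfl, satProg_glReductOf_self P Y⟩, Or.inl rfl⟩⟩

lemma IsFactProg.satProg_glReductOf_mono {R : Program} (hR : IsFactProg R) {I J K : Finset Lit}
    (hJK : J ⊆ K) (h : SatProg J (glReductOf R I)) : SatProg K (glReductOf R I) := by
  intro r hr _ _
  obtain ⟨wr, hwr, -, -, rfl⟩ := mem_glReductOf.mp hr
  obtain ⟨hpos, -⟩ := hR wr hwr
  obtain ⟨l, hl⟩ := h _ hr (by simp [hpos]) (Finset.empty_inter _)
  exact ⟨l, Finset.inter_subset_inter_left hJK hl⟩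

lemma isFactProg_image_factOf (Z : Finset Lit) : IsFactProg (Z.image factOf) := by
  intro wr hwr
  obtain ⟨l, -, rfl⟩ := Finset.mem_image.mp hwr
  exact ⟨rfl, rfl⟩

lemma satProg_glReductOf_image_factOf {Z I J : Finset Lit} (hZ : Z ⊆ I) :
    SatProg J (glReductOf (Z.image factOf) I) ↔ Z ⊆ J := by
  constructor
  · intro h l hl
    have hmem : (⟨{l}, ∅, ∅⟩ : Rule) ∈ glReductOf (Z.image factOf) I :=
      mem_glReductOf.mpr ⟨factOf l, Finset.mem_image_of_mem _ hl,
        fun _ _ => ⟨l, by simp [factOf, hZ hl]⟩, Finset.empty_inter _, rfl⟩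
    obtain ⟨x, hx⟩ := h _ hmem (Finset.empty_subset _) (Finset.empty_inter _)
    obtain ⟨rfl, hxJ⟩ : x = l ∧ x ∈ J := by simpa using hx
    exact hxJ
  · intro hZJ r hr _ _
    obtain ⟨wr, hwr, -, -, rfl⟩ := mem_glReductOf.mp hr
    obtain ⟨l, hl, rfl⟩ := Finset.mem_image.mp hwr
    exact ⟨l, by simp [factOf, hZJ hl]⟩

def ExistsSEModelBetween (P : Program) (Z Y : Finset Lit) : Prop :=
  ∃ J, Z ⊆ J ∧ J ⊂ Y ∧ SEModel P J Y

lemma stable_union_facts_iff {P : Program} {Z Y : Finset Lit} (hZY : Z ⊆ Y) :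
    Stable (P ∪ Z.image factOf) Y ↔ Consistent Y ∧ ¬ ExistsSEModelBetween P Z Y := by
  simp only [stable_iff, glReductOf_union, satProg_union, satProg_glReductOf_image_factOf hZY,
    ExistsSEModelBetween, seModel_iff]
  constructor
  · rintro ⟨hY, hmin⟩
    exact ⟨hY, fun ⟨J, hZJ, hJY, _, _, hJ⟩ => hmin J hJY ⟨hJ, hZJ⟩⟩
  · rintro ⟨hY, hnone⟩
    exact ⟨hY, fun J hJY ⟨hJ, hZJ⟩ => hnone ⟨J, hZJ, hJY, hY, hJY.subset, hJ⟩⟩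

lemma existsSEModelBetween_iff_of_semiUniform {P Q : Program}
    (hPQ : ∀ R : Program, IsFactProg R → ∀ I, Stable (P ∪ R) I ↔ Stable (Q ∪ R) I)
    {Z Y : Finset Lit} (hZY : Z ⊆ Y) :
    ExistsSEModelBetween P Z Y ↔ ExistsSEModelBetween Q Z Y := by
  by_cases hY : Consistent Y
  · have h := hPQ _ (isFactProg_image_factOf Z) Y
    rw [stable_union_facts_iff hZY, stable_union_facts_iff hZY] at h
    simpa [hY, not_iff_not] using h
  · have hinc : ∀ {P : Program}, ¬ ExistsSEModelBetween P Z Y :=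
      fun ⟨_, _, _, hJ⟩ => hY hJ.1.2.1
    exact iff_of_false hinc hinc

lemma ueModel_iff_of_ssubset {P : Program} {X Y : Finset Lit} (hXY : X ⊂ Y) :
    UEModel P X Y ↔ ExistsSEModelBetween P X Y ∧
      ∀ Z, X ⊂ Z → Z ⊂ Y → ¬ ExistsSEModelBetween P Z Y := by
  constructor
  · rintro ⟨hX, hmax⟩
    have hmax := (hmax.resolve_left hXY.ne).2
    exact ⟨⟨X, subset_rfl, hXY, hX⟩,
      fun Z hXZ _ ⟨J, hZJ, hJY, hJ⟩ => hmax J (hXZ.trans_le hZJ) hJY hJ⟩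
  · rintro ⟨⟨J, hXJ, hJY, hJ⟩, hnone⟩
    have hJX : J = X := by
      by_contra hne
      exact hnone J (hXJ.ssubset_of_ne (Ne.symm hne)) hJY ⟨J, subset_rfl, hJY, hJ⟩
    subst hJX
    exact ⟨hJ, Or.inr ⟨hXY, fun Z hXZ hZY hZ => hnone Z hXZ hZY ⟨Z, subset_rfl, hZY, hZ⟩⟩⟩

lemma ueModel_iff_of_semiUniform {P Q : Program}
    (hPQ : ∀ R : Program, IsFactProg R → ∀ I, Stable (P ∪ R) I ↔ Stable (Q ∪ R) I)
    (X Y : Finset Lit) : UEModel P X Y ↔ UEModel Q X Y := by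
  rcases eq_or_ne X Y with rfl | hne
  · rw [ueModel_self_iff, ueModel_self_iff]
  by_cases hXY : X ⊆ Y
  · have hXY := hXY.ssubset_of_ne hne
    rw [ueModel_iff_of_ssubset hXY, ueModel_iff_of_ssubset hXY,
      existsSEModelBetween_iff_of_semiUniform hPQ hXY.subset]
    refine and_congr_right fun _ => forall_congr' fun Z => forall_congr' fun _ =>
      forall_congr' fun hZY => ?_
    rw [existsSEModelBetween_iff_of_semiUniform hPQ hZY.subset]
  · have hnot : ∀ {P : Program}, ¬ UEModel P X Y := fun h => hXY h.1.1.2.2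
    exact iff_of_false hnot hnot

lemma exists_ueModel_of_seModel {P : Program} {J I : Finset Lit} (hJ : SEModel P J I)
    (hJI : J ⊂ I) : ∃ K, J ⊆ K ∧ K ⊂ I ∧ UEModel P K I := by
  let S := I.powerset.filter fun K => J ⊆ K ∧ K ⊂ I ∧ SEModel P K I
  have hJS : J ∈ S := by simp [S, hJI.subset, hJI, hJ]
  obtain ⟨K, hKS, hKmax⟩ := S.exists_max_image Finset.card ⟨J, hJS⟩
  simp only [S, Finset.mem_filter, Finset.mem_powerset] at hKS hKmax
  obtain ⟨-, hJK, hKI, hK⟩ := hKS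
  refine ⟨K, hJK, hKI, hK, Or.inr ⟨hKI, fun K' hKK' hK'I hK' => ?_⟩⟩
  have := hKmax K' ⟨hK'I.subset, hJK.trans hKK'.subset, hK'I, hK'⟩
  exact this.not_gt (Finset.card_lt_card hKK')

lemma stable_union_iff_ueModel {P R : Program} (hR : IsFactProg R) {I : Finset Lit} :
    Stable (P ∪ R) I ↔
      Consistent I ∧ ∀ K, UEModel P K I → K ⊂ I → ¬ SatProg K (glReductOf R I) := by
  simp only [stable_iff, glReductOf_union, satProg_union]
  refine and_congr_right fun hI => ⟨fun hmin K hK hKI hKR => hmin K hKI ⟨hK.1.2, hKR⟩, ?_⟩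
  rintro hnone J hJI ⟨hJP, hJR⟩
  obtain ⟨K, hJK, hKI, hK⟩ :=
    exists_ueModel_of_seModel (seModel_iff.mpr ⟨hI, hJI.subset, hJP⟩) hJI
  exact hnone K hK hKI (hR.satProg_glReductOf_mono hJK hJR)

/-- Two LPMLN programs `P` and `Q` are semi-uniformly equivalent (i.e.,
for every set `R` of weighted facts, `SM(P ∪ R) = SM(Q ∪ R)`) if and only if `P` and
`Q` have the same UE-models. -/
theorem semiUniformEq_iff_same_UEModels (P Q : Program) :
    (∀ R : Program, IsFactProg R → ∀ I, Stable (P ∪ R) I ↔ Stable (Q ∪ R) I) ↔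
      (∀ X Y, UEModel P X Y ↔ UEModel Q X Y) := by
  refine ⟨ueModel_iff_of_semiUniform, fun hPQ R hR I => ?_⟩
  rw [stable_union_iff_ueModel hR, stable_union_iff_ueModel hR]
  simp only [hPQ]

end LPMLN
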